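/- arXiv:2605.20252 — 4 statements merged into one kernel-verified Lean document; each statement's English description precedes it below -/
import Mathlib

section
/- Let V be a real inner product space and let n ∈ V be a unit vector (⟪n, n⟫ = 1). For every integer p ≥ 2 and all x, c ∈ V, the element f(x) = (ι(x) * ι(n))^p * ι(n) + ι(c) of the Clifford algebra Cl(V) lies in the grade-1 subspace, i.e. there exists y ∈ V with (ι(x) * ι(n))^p * ι(n) + ι(c) = ι(y). In particular the Clifford Julia operator f is a well-defined map from V to V. -/
open scoped InnerProductSpace

/-- The quadratic form `Q v = ⟪v, v⟫` on a real inner product space. -/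
noncomputable def Qf (V : Type*) [NormedAddCommGroup V] [InnerProductSpace ℝ V] :
    QuadraticForm ℝ V :=
  LinearMap.BilinMap.toQuadraticMap (innerₗ V)

/-! Left multiplication by `ι a * ι b` maps the vectors of the plane spanned by `a` and `b` back
into that plane (by `ι a ι b ι a = ι (polar a b • a - Q a • b)` and `ι b ι b = Q b`), so
`(ι a * ι b) ^ k * ι b`, which starts from the vector `ι b`, stays a vector for every `k`. -/

namespace CliffordAlgebra

variable {R M : Type*} [CommRing R] [AddCommGroup M] [Module R M] {Q : QuadraticForm R M}

theorem ι_mul_ι_mul_ι_mem_map_span_pair {a b w : M} (hw : w ∈ Submodule.span R {a, b}) :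
    ι Q a * ι Q b * ι Q w ∈ (Submodule.span R {a, b}).map (ι Q) := by
  let f := LinearMap.mulLeft R (ι Q a * ι Q b) ∘ₗ ι Q
  suffices Submodule.span R {a, b} ≤ ((Submodule.span R {a, b}).map (ι Q)).comap f from this hw
  have ha : a ∈ Submodule.span R {a, b} := Submodule.subset_span (by simp)
  have hb : b ∈ Submodule.span R {a, b} := Submodule.subset_span (by simp)
  rw [Submodule.span_le, Set.insert_subset_iff, Set.singleton_subset_iff]
  constructor
  · refine ⟨QuadraticMap.polar Q a b • a - Q a • b, ?_, (ι_mul_ι_mul_ι a b).symm⟩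
    exact Submodule.sub_mem _ (Submodule.smul_mem _ _ ha) (Submodule.smul_mem _ _ hb)
  · refine ⟨Q b • a, Submodule.smul_mem _ _ ha, ?_⟩
    simp only [f, LinearMap.comp_apply, LinearMap.mulLeft_apply, mul_assoc, ι_sq_scalar]
    rw [map_smul, Algebra.smul_def, Algebra.commutes]

theorem pow_mul_ι_mem_map_span_pair (a b : M) (k : ℕ) :
    (ι Q a * ι Q b) ^ k * ι Q b ∈ (Submodule.span R {a, b}).map (ι Q) := by
  induction k with
  | zero => simpa using Submodule.mem_map_of_mem (f := ι Q) (Submodule.subset_span (by simp))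
  | succ k ih =>
    obtain ⟨w, hw, hιw⟩ := ih
    rw [pow_succ', mul_assoc, ← hιw]
    exact ι_mul_ι_mul_ι_mem_map_span_pair hw

end CliffordAlgebra

theorem clifford_julia_well_defined_general
    (V : Type*) [NormedAddCommGroup V] [InnerProductSpace ℝ V]
    (n : V) (p : ℕ) (x c : V) :
    ∃ y : V,
      (CliffordAlgebra.ι (Qf V) x * CliffordAlgebra.ι (Qf V) n) ^ p *
          CliffordAlgebra.ι (Qf V) n + CliffordAlgebra.ι (Qf V) c
        = CliffordAlgebra.ι (Qf V) y := by
  obtain ⟨w, -, hw⟩ := CliffordAlgebra.pow_mul_ι_mem_map_span_pair (Q := Qf V) x n p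
  exact ⟨w + c, by rw [map_add, hw]⟩

theorem clifford_julia_well_defined
    (V : Type*) [NormedAddCommGroup V] [InnerProductSpace ℝ V]
    (n : V) (hn : ⟪n, n⟫_ℝ = 1) (p : ℕ) (hp : 2 ≤ p) (x c : V) :
    ∃ y : V,
      (CliffordAlgebra.ι (Qf V) x * CliffordAlgebra.ι (Qf V) n) ^ p *
          CliffordAlgebra.ι (Qf V) n + CliffordAlgebra.ι (Qf V) c
        = CliffordAlgebra.ι (Qf V) y :=
  clifford_julia_well_defined_general V n p x c
end

section
/- Let V be a real inner product space, let n ∈ V be a unit vector (⟪n, n⟫ = 1), let c, x₀ ∈ V, and let p ≥ 2 be an integer. Define g : Cl(V) → Cl(V) by g(m) = (m * ι(n))^p * ι(n) + ι(c). Then for every natural number k, the k-th iterate g^[k](ι(x₀)) lies in the range of ι; that is, the entire orbit of the Clifford Julia iteration starting at ι(x₀) remains in the grade-1 subspace of Cl(V). -/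
open scoped InnerProductSpace

lemma Qf_apply (V : Type*) [NormedAddCommGroup V] [InnerProductSpace ℝ V] (v : V) :
    Qf V v = ⟪v, v⟫_ℝ := rfl

lemma clifford_key
    (V : Type*) [NormedAddCommGroup V] [InnerProductSpace ℝ V]
    (n : V) (hn : ⟪n, n⟫_ℝ = 1) (v : V) (p : ℕ) :
    ∃ a b : ℝ,
      (CliffordAlgebra.ι (Qf V) v * CliffordAlgebra.ι (Qf V) n) ^ p
          * CliffordAlgebra.ι (Qf V) n
        = CliffordAlgebra.ι (Qf V) (a • v + b • n) := by
  set ι := CliffordAlgebra.ι (Qf V)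
  induction p with
  | zero =>
      exact ⟨0, 1, by simp⟩
  | succ p ih =>
      obtain ⟨a, b, h⟩ := ih
      refine ⟨a * QuadraticMap.polar (Qf V) v n + b, -(a * Qf V v), ?_⟩
      have hswap : ι n * ι v =
          algebraMap ℝ _ (QuadraticMap.polar (Qf V) v n) - ι v * ι n :=
        eq_sub_of_add_eq' (CliffordAlgebra.ι_mul_ι_add_swap v n)
      have hvv : ι v * ι v = algebraMap ℝ _ (Qf V v) := CliffordAlgebra.ι_sq_scalar _ v
      have hnn : ι n * ι n = 1 := by
        rw [CliffordAlgebra.ι_sq_scalar, Qf_apply, hn, map_one]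
      rw [pow_succ', mul_assoc, h]
      rw [map_add, map_smul, map_smul, mul_add, mul_smul_comm, mul_smul_comm,
        mul_assoc, mul_assoc, hswap, hnn, mul_one, mul_sub, ← mul_assoc, hvv]
      rw [map_add, map_smul, map_smul]
      simp only [← Algebra.commutes, ← Algebra.smul_def, smul_sub, smul_smul]
      module
theorem clifford_julia_orbit_in_range
    (V : Type*) [NormedAddCommGroup V] [InnerProductSpace ℝ V]
    (n : V) (hn : ⟪n, n⟫_ℝ = 1) (c x₀ : V) (p : ℕ) (hp : 2 ≤ p) (k : ℕ) :
    (fun m : CliffordAlgebra (Qf V) =>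
        (m * CliffordAlgebra.ι (Qf V) n) ^ p * CliffordAlgebra.ι (Qf V) n
          + CliffordAlgebra.ι (Qf V) c)^[k] (CliffordAlgebra.ι (Qf V) x₀)
      ∈ Set.range (CliffordAlgebra.ι (Qf V)) := by
  induction k with
  | zero => exact ⟨x₀, rfl⟩
  | succ k ih =>
      obtain ⟨w, hw⟩ := ih
      rw [Function.iterate_succ_apply', ← hw]
      obtain ⟨a, b, h⟩ := clifford_key V n hn w p
      exact ⟨a • w + b • n + c, by simp [h]⟩
end

section
/- Let V be a real inner product space and let n ∈ V be a unit vector (⟪n, n⟫ = 1). For every x ∈ V and every integer p ≥ 1, there exist real scalars a and b such that (ι(x) * ι(n))^p * ι(n) = a • ι(n) + b • ι(x − ⟪x, n⟫ • n). In particular, all powers of the Clifford Julia iterate lie in the two-dimensional subspace of V spanned by n and the rejection x − ⟪x, n⟫ • n. -/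
open scoped InnerProductSpace

/-!
For any quadratic form, `ι a * ι b * ι b = Q b • ι a` and
`ι a * ι b * ι a = ι (polar Q a b • a - Q a • b)`, so left multiplication by `ι a * ι b` maps
the image under `ι` of the plane `span {b, a}` into itself. Hence every `(ι x * ι n) ^ p * ι n`
is the image of a vector `α • n + β • x`, and `x = ⟪x, n⟫ • n + (x - ⟪x, n⟫ • n)` rewrites it in
terms of `n` and the rejection.
-/

namespace CliffordAlgebra

open Submodule

variable {R M : Type*} [CommRing R] [AddCommGroup M] [Module R M] {Q : QuadraticForm R M}

theorem ι_mul_ι_mul_ι_self (a b : M) : ι Q a * ι Q b * ι Q b = ι Q (Q b • a) := by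
  rw [mul_assoc, ι_sq_scalar, ← Algebra.commutes, ← Algebra.smul_def, map_smul]

theorem ι_mul_ι_mul_mem_map_span_pair {a b : M} {z : CliffordAlgebra Q}
    (hz : z ∈ (span R {b, a}).map (ι Q)) :
    ι Q a * ι Q b * z ∈ (span R {b, a}).map (ι Q) := by
  obtain ⟨v, hv, rfl⟩ := hz
  obtain ⟨s, t, rfl⟩ := mem_span_pair.mp hv
  have hb : b ∈ span R {b, a} := subset_span (Set.mem_insert b {a})
  have ha : a ∈ span R {b, a} := subset_span (Set.mem_insert_of_mem b rfl)
  rw [map_add, map_smul, map_smul, mul_add, mul_smul_comm, mul_smul_comm, ι_mul_ι_mul_ι_self,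
    ι_mul_ι_mul_ι, ← map_smul, ← map_smul, ← map_add]
  refine mem_map_of_mem (add_mem (smul_mem _ _ (smul_mem _ _ ha)) (smul_mem _ _ ?_))
  exact sub_mem (smul_mem _ _ ha) (smul_mem _ _ hb)

theorem ι_mul_ι_pow_mul_ι_mem_map_span_pair (a b : M) (p : ℕ) :
    (ι Q a * ι Q b) ^ p * ι Q b ∈ (span R {b, a}).map (ι Q) := by
  induction p with
  | zero =>
    rw [pow_zero, one_mul]
    exact mem_map_of_mem (subset_span (Set.mem_insert b {a}))
  | succ p ih => rw [pow_succ', mul_assoc]; exact ι_mul_ι_mul_mem_map_span_pair ih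

end CliffordAlgebra

theorem iterate_in_plane_of_n_and_rejection_general
    (V : Type*) [NormedAddCommGroup V] [InnerProductSpace ℝ V]
    (n : V) (x : V) (p : ℕ) :
    ∃ a b : ℝ,
      (CliffordAlgebra.ι (Qf V) x * CliffordAlgebra.ι (Qf V) n) ^ p *
          CliffordAlgebra.ι (Qf V) n
        = a • CliffordAlgebra.ι (Qf V) n
          + b • CliffordAlgebra.ι (Qf V) (x - ⟪x, n⟫_ℝ • n) := by
  obtain ⟨w, hw, hιw⟩ := CliffordAlgebra.ι_mul_ι_pow_mul_ι_mem_map_span_pair (Q := Qf V) x n p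
  obtain ⟨a, b, rfl⟩ := Submodule.mem_span_pair.mp hw
  refine ⟨a + b * ⟪x, n⟫_ℝ, b, ?_⟩
  rw [← hιw, map_sub, map_add, map_smul, map_smul, map_smul]
  module

theorem iterate_in_plane_of_n_and_rejection
    (V : Type*) [NormedAddCommGroup V] [InnerProductSpace ℝ V]
    (n : V) (hn : ⟪n, n⟫_ℝ = 1) (x : V) (p : ℕ) (hp : 1 ≤ p) :
    ∃ a b : ℝ,
      (CliffordAlgebra.ι (Qf V) x * CliffordAlgebra.ι (Qf V) n) ^ p *
          CliffordAlgebra.ι (Qf V) n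
        = a • CliffordAlgebra.ι (Qf V) n
          + b • CliffordAlgebra.ι (Qf V) (x - ⟪x, n⟫_ℝ • n) :=
  iterate_in_plane_of_n_and_rejection_general V n x p
end

section
/- Let V be a real inner product space, let n ∈ V be a unit vector (⟪n, n⟫ = 1), let c ∈ V, and let p ≥ 2 be an integer. Then there exists a map F : V → V such that for every x ∈ V, ι(F(x)) = (ι(x) * ι(n))^p * ι(n) + ι(c); that is, the Clifford Julia operator descends to a well-defined self-map of the vector space V, and every iterate of the associated dynamical system x_{k+1} = F(x_k) remains in V. -/
open scoped InnerProductSpace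

lemma pow_decomp (V : Type*) [NormedAddCommGroup V] [InnerProductSpace ℝ V]
    (n : V) (hn : ⟪n, n⟫_ℝ = 1) (x : V) (k : ℕ) :
    ∃ a b : ℝ, (CliffordAlgebra.ι (Qf V) x * CliffordAlgebra.ι (Qf V) n) ^ k
      = algebraMap ℝ _ a + b • (CliffordAlgebra.ι (Qf V) x * CliffordAlgebra.ι (Qf V) n) := by
  set ι := CliffordAlgebra.ι (Qf V)
  have hsq : (ι x * ι n) * (ι x * ι n)
      = QuadraticMap.polar (Qf V) x n • (ι x * ι n)
        - algebraMap ℝ _ (Qf V x) := by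
    have hswap := CliffordAlgebra.ι_mul_ι_add_swap (Q := Qf V) x n
    have h1 : ι n * ι x = algebraMap ℝ _ (QuadraticMap.polar (Qf V) x n) - ι x * ι n := by
      rw [← hswap]; abel
    calc (ι x * ι n) * (ι x * ι n) = ι x * (ι n * ι x) * ι n := by noncomm_ring
      _ = ι x * (algebraMap ℝ _ (QuadraticMap.polar (Qf V) x n) - ι x * ι n) * ι n := by
          rw [h1]
      _ = QuadraticMap.polar (Qf V) x n • (ι x * ι n) - (ι x * ι x) * (ι n * ι n) := by
          rw [Algebra.smul_def, mul_sub, sub_mul,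
            show ι x * algebraMap ℝ (CliffordAlgebra (Qf V)) (QuadraticMap.polar (Qf V) x n)
              = algebraMap ℝ (CliffordAlgebra (Qf V)) (QuadraticMap.polar (Qf V) x n) * ι x
              from (Algebra.commutes _ _).symm]
          noncomm_ring
      _ = _ := by
          rw [CliffordAlgebra.ι_sq_scalar, CliffordAlgebra.ι_sq_scalar,
            Qf_apply V n, hn, map_one, mul_one]
  induction k with
  | zero => exact ⟨1, 0, by simp⟩
  | succ k ih =>
    obtain ⟨a, b, hab⟩ := ih
    refine ⟨-(b * Qf V x), a + b * QuadraticMap.polar (Qf V) x n, ?_⟩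
    rw [pow_succ, hab, add_mul, smul_mul_assoc, hsq]
    rw [smul_sub, Algebra.smul_def, Algebra.smul_def, Algebra.smul_def, Algebra.smul_def]
    simp only [map_neg, map_mul, map_add]
    noncomm_ring

theorem clifford_julia_descends_to_V
    (V : Type*) [NormedAddCommGroup V] [InnerProductSpace ℝ V]
    (n : V) (hn : ⟪n, n⟫_ℝ = 1) (c : V) (p : ℕ) (hp : 2 ≤ p) :
    ∃ F : V → V, ∀ x : V,
      CliffordAlgebra.ι (Qf V) (F x)
        = (CliffordAlgebra.ι (Qf V) x * CliffordAlgebra.ι (Qf V) n) ^ p *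
            CliffordAlgebra.ι (Qf V) n + CliffordAlgebra.ι (Qf V) c := by
  classical
  have key : ∀ x : V, ∃ y : V,
      CliffordAlgebra.ι (Qf V) y
        = (CliffordAlgebra.ι (Qf V) x * CliffordAlgebra.ι (Qf V) n) ^ p *
            CliffordAlgebra.ι (Qf V) n + CliffordAlgebra.ι (Qf V) c := by
    intro x
    obtain ⟨a, b, hab⟩ := pow_decomp V n hn x p
    refine ⟨a • n + b • x + c, ?_⟩
    have hnn : CliffordAlgebra.ι (Qf V) n * CliffordAlgebra.ι (Qf V) n = 1 := by
      rw [CliffordAlgebra.ι_sq_scalar, Qf_apply V n, hn, map_one]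
    rw [map_add, map_add, map_smul, map_smul, hab, add_mul, smul_mul_assoc, mul_assoc, hnn,
      mul_one, Algebra.smul_def, Algebra.smul_def]
  choose F hF using key
  exact ⟨F, hF⟩
end
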